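/- arXiv:2201.10689 — 2 statements merged into one kernel-verified Lean document; each statement's English description precedes it below -/
import Mathlib

section
/- Let f₁, …, f_m : ℝⁿ → (-∞, ∞] be proper convex functions with ⋂_{i=1}^m ri(dom(f_i)) ≠ ∅, and define the set-valued mapping F(x) = [f₁(x), ∞) × ⋯ × [f_m(x), ∞). Then ri(gph(F)) = {(x, λ₁, …, λ_m) : x ∈ ⋂_{i=1}^m ri(dom(f_i)) and f_i(x) < λ_i for all i = 1, …, m}. -/
open Set Filter Topology

section helpers

variable {E : Type*} [NormedAddCommGroup E] [NormedSpace ℝ E]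

lemma mem_ri_iff' {s : Set E} {x : E} :
    x ∈ intrinsicInterior ℝ s ↔
      x ∈ affineSpan ℝ s ∧
        ∃ ε > (0:ℝ), ∀ y ∈ (affineSpan ℝ s : Set E), dist y x < ε → y ∈ s := by
  rw [mem_intrinsicInterior]
  constructor
  · rintro ⟨y, hy, rfl⟩
    refine ⟨y.2, ?_⟩
    rw [mem_interior_iff_mem_nhds, Metric.mem_nhds_iff] at hy
    obtain ⟨ε, hε, hball⟩ := hy
    refine ⟨ε, hε, fun z hz hdz => ?_⟩
    exact hball (show (⟨z, hz⟩ : affineSpan ℝ s) ∈ Metric.ball y ε by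
      simpa [Metric.mem_ball, Subtype.dist_eq] using hdz)
  · rintro ⟨hx, ε, hε, h⟩
    refine ⟨⟨x, hx⟩, ?_, rfl⟩
    rw [mem_interior_iff_mem_nhds, Metric.mem_nhds_iff]
    exact ⟨ε, hε, fun z hz => h z z.2 (by simpa [Metric.mem_ball, Subtype.dist_eq] using hz)⟩

lemma combo_mem_ri {s : Set E} (hs : Convex ℝ s) {x y : E}
    (hx : x ∈ intrinsicInterior ℝ s) (hy : y ∈ s) {a b : ℝ} (ha : 0 < a) (hb : 0 ≤ b)
    (hab : a + b = 1) : a • x + b • y ∈ intrinsicInterior ℝ s := by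
  rw [mem_ri_iff'] at hx ⊢
  obtain ⟨hxs, ε, hε, h⟩ := hx
  have hys : y ∈ affineSpan ℝ s := subset_affineSpan ℝ s hy
  have hzs : a • x + b • y ∈ affineSpan ℝ s := by
    have := AffineSubspace.smul_vsub_vadd_mem (affineSpan ℝ s) a hxs hys hys
    have heq : a • (x -ᵥ y) +ᵥ y = a • x + b • y := by
      simp only [vsub_eq_sub, vadd_eq_add, smul_sub]
      have : b = 1 - a := by linarith
      rw [this, sub_smul, one_smul]; abel
    rwa [heq] at this
  refine ⟨hzs, a * ε, by positivity, fun w hw hdw => ?_⟩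
  set z₀ := a • x + b • y with hz₀
  have hvs : a⁻¹ • (w - z₀) + x ∈ affineSpan ℝ s := by
    have := AffineSubspace.smul_vsub_vadd_mem (affineSpan ℝ s) a⁻¹ hw hzs hxs
    simpa [vsub_eq_sub, vadd_eq_add] using this
  have hdv : dist (a⁻¹ • (w - z₀) + x) x < ε := by
    rw [dist_eq_norm]
    have : a⁻¹ • (w - z₀) + x - x = a⁻¹ • (w - z₀) := by abel
    rw [this, norm_smul, Real.norm_eq_abs, abs_inv, abs_of_pos ha]
    rw [dist_eq_norm] at hdw
    rw [inv_mul_lt_iff₀ ha]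
    linarith [hdw]
  have hv : a⁻¹ • (w - z₀) + x ∈ s := h _ hvs hdv
  have hkey : a • (a⁻¹ • (w - z₀) + x) + b • y = w := by
    rw [smul_add, smul_smul, mul_inv_cancel₀ (ne_of_gt ha), one_smul]
    rw [hz₀]; abel
  have := hs hv hy ha.le hb hab
  rwa [hkey] at this

lemma ri_prolong {s : Set E} {x : E} (hx : x ∈ intrinsicInterior ℝ s) {y : E} (hy : y ∈ s) :
    ∃ t > (1:ℝ), y + t • (x - y) ∈ s := by
  rw [mem_ri_iff'] at hx
  obtain ⟨hxs, ε, hε, h⟩ := hx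
  set c := ‖x - y‖ with hc
  have hc0 : 0 ≤ c := norm_nonneg _
  refine ⟨1 + ε / (2 * (c + 1)), by nlinarith [div_pos hε (by positivity : (0:ℝ) < 2*(c+1))], ?_⟩
  set t := 1 + ε / (2 * (c + 1)) with ht
  have hspan : y + t • (x - y) ∈ affineSpan ℝ s := by
    have := AffineSubspace.smul_vsub_vadd_mem (affineSpan ℝ s) t hxs
      (subset_affineSpan ℝ s hy) (subset_affineSpan ℝ s hy)
    simpa [vsub_eq_sub, vadd_eq_add, add_comm] using this
  refine h _ hspan ?_
  rw [dist_eq_norm]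
  have heq : y + t • (x - y) - x = (t - 1) • (x - y) := by
    rw [sub_smul, one_smul]; abel
  rw [heq, norm_smul, Real.norm_eq_abs]
  have ht1 : t - 1 = ε / (2 * (c + 1)) := by rw [ht]; ring
  rw [ht1, abs_of_pos (by positivity)]
  have h2 : ε / (2 * (c + 1)) * c < ε / (2 * (c + 1)) * (c + 1) := by
    apply mul_lt_mul_of_pos_left (by linarith) (by positivity)
  have h3 : ε / (2 * (c + 1)) * (c + 1) = ε / 2 := by field_simp
  linarith

lemma prolong_ri [FiniteDimensional ℝ E] {s : Set E} (hs : Convex ℝ s) {x : E} (hxs : x ∈ s)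
    (h : ∀ y ∈ s, ∃ t > (1:ℝ), y + t • (x - y) ∈ s) : x ∈ intrinsicInterior ℝ s := by
  obtain ⟨w, hw⟩ := Set.Nonempty.intrinsicInterior hs ⟨x, hxs⟩
  obtain ⟨t, ht, hz⟩ := h w (intrinsicInterior_subset hw)
  have ht0 : t ≠ 0 := by linarith
  have hkey : (1 - 1/t) • w + (1/t) • (w + t • (x - w)) = x := by
    rw [smul_add, smul_smul, sub_smul, one_smul]
    rw [one_div, inv_mul_cancel₀ ht0, one_smul]
    abel
  have := combo_mem_ri hs hw hz (a := 1 - 1/t) (b := 1/t)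
    (by rw [sub_pos, div_lt_one (by linarith)]; linarith) (by positivity) (by ring)
  rwa [hkey] at this

end helpers

/-- Relative interior of the graph of the generalized epigraphical mapping
`F(x) = ∏ i, [fᵢ(x), ∞)` for proper convex functions `fᵢ` with
`⋂ i, ri(dom fᵢ) ≠ ∅`. -/
theorem stmt_3 (n m : ℕ) (f : Fin m → EuclideanSpace ℝ (Fin n) → EReal)
    (hproper : ∀ i, ∃ x, f i x ≠ ⊤) (hbot : ∀ i x, f i x ≠ ⊥)
    (hconv : ∀ i, Convex ℝ {p : EuclideanSpace ℝ (Fin n) × ℝ | f i p.1 ≤ (p.2 : EReal)})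
    (hqc : (⋂ i, intrinsicInterior ℝ {x | f i x < ⊤}).Nonempty) :
    intrinsicInterior ℝ
        {p : EuclideanSpace ℝ (Fin n) × EuclideanSpace ℝ (Fin m) |
          ∀ i, f i p.1 ≤ (p.2 i : EReal)} =
      {p : EuclideanSpace ℝ (Fin n) × EuclideanSpace ℝ (Fin m) |
        p.1 ∈ (⋂ i, intrinsicInterior ℝ {x | f i x < ⊤}) ∧ ∀ i, f i p.1 < (p.2 i : EReal)} := by
  set S : Set (EuclideanSpace ℝ (Fin n) × EuclideanSpace ℝ (Fin m)) :=
    {p | ∀ i, f i p.1 ≤ (p.2 i : EReal)} with hS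
  -- basic coercion fact
  have hreal : ∀ i (x : EuclideanSpace ℝ (Fin n)), f i x < ⊤ → f i x = ((f i x).toReal : EReal) := fun i x hx =>
    (EReal.coe_toReal hx.ne (hbot i x)).symm
  -- convexity of domains
  have hdomconv : ∀ i, Convex ℝ {x : EuclideanSpace ℝ (Fin n) | f i x < ⊤} := by
    intro i x hx y hy a b ha hb hab
    have h1 : ((x, (f i x).toReal) : EuclideanSpace ℝ (Fin n) × ℝ) ∈ {p : EuclideanSpace ℝ (Fin n) × ℝ | f i p.1 ≤ (p.2 : EReal)} :=
      le_of_eq (hreal i x hx)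
    have h2 : ((y, (f i y).toReal) : EuclideanSpace ℝ (Fin n) × ℝ) ∈ {p : EuclideanSpace ℝ (Fin n) × ℝ | f i p.1 ≤ (p.2 : EReal)} :=
      le_of_eq (hreal i y hy)
    have := hconv i h1 h2 ha hb hab
    simp only [Prod.smul_mk, Prod.mk_add_mk, mem_setOf_eq, smul_eq_mul] at this
    exact lt_of_le_of_lt this (EReal.coe_lt_top _)
  -- convexity of S
  have hSconv : Convex ℝ S := by
    intro p hp q hq a b ha hb hab
    intro i
    have h1 : ((p.1, p.2 i) : EuclideanSpace ℝ (Fin n) × ℝ) ∈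
        {p : EuclideanSpace ℝ (Fin n) × ℝ | f i p.1 ≤ (p.2 : EReal)} := hp i
    have h2 : ((q.1, q.2 i) : EuclideanSpace ℝ (Fin n) × ℝ) ∈
        {p : EuclideanSpace ℝ (Fin n) × ℝ | f i p.1 ≤ (p.2 : EReal)} := hq i
    have := hconv i h1 h2 ha hb hab
    simp only [mem_setOf_eq, Prod.fst_add, Prod.smul_fst, Prod.snd_add, Prod.smul_snd,
      smul_eq_mul] at this ⊢
    refine this.trans_eq ?_
    norm_cast
  ext ⟨x, l⟩
  simp only [mem_setOf_eq]
  constructor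
  · intro h
    have hmem : ∀ i, f i x ≤ (l i : EReal) := intrinsicInterior_subset h
    constructor
    · -- x ∈ ⋂ ri dom
      obtain ⟨w, hw⟩ := hqc
      rw [mem_iInter] at hw
      set ν : EuclideanSpace ℝ (Fin m) := WithLp.toLp 2 (fun j => (f j w).toReal : ∀ _ : Fin m, ℝ) with hν
      have hwS : (w, ν) ∈ S := by
        intro j
        have hwd : w ∈ {x : EuclideanSpace ℝ (Fin n) | f j x < ⊤} :=
          intrinsicInterior_subset (hw j)
        exact le_of_eq (hreal j w hwd)
      obtain ⟨t, ht, hz⟩ := ri_prolong h hwS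
      have hzfst : ((w, ν) + t • ((x, l) - (w, ν))).1 = w + t • (x - w) := by
        simp [Prod.smul_fst]
      have hzdom : ∀ j, w + t • (x - w) ∈ {x : EuclideanSpace ℝ (Fin n) | f j x < ⊤} := by
        intro j
        have := hz j
        rw [hzfst] at this
        exact lt_of_le_of_lt this (EReal.coe_lt_top _)
      rw [mem_iInter]
      intro j
      have ht0 : t ≠ 0 := by linarith
      have hkey : (1 - 1/t) • w + (1/t) • (w + t • (x - w)) = x := by
        rw [smul_add, smul_smul, sub_smul, one_smul, one_div, inv_mul_cancel₀ ht0, one_smul]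
        abel
      have := combo_mem_ri (hdomconv j) (hw j) (hzdom j) (a := 1 - 1/t) (b := 1/t)
        (by rw [sub_pos, div_lt_one (by linarith)]; linarith) (by positivity) (by ring)
      rwa [hkey] at this
    · -- strictness
      intro i
      set l' : EuclideanSpace ℝ (Fin m) := WithLp.toLp 2 (fun j => l j + (if j = i then 1 else 0) : ∀ _ : Fin m, ℝ) with hl'
      have hl'S : (x, l') ∈ S := by
        intro j
        refine (hmem j).trans ?_
        show ((l j : ℝ) : EReal) ≤ ((l' j : ℝ) : EReal)
        have : l j ≤ l' j := by
          show l j ≤ l j + (if j = i then 1 else 0); split <;> linarith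
        exact_mod_cast this
      obtain ⟨t, ht, hz⟩ := ri_prolong h hl'S
      have := hz i
      have hfst : ((x, l') + t • ((x, l) - (x, l'))).1 = x := by
        simp [Prod.smul_fst]
      have hsnd : ((x, l') + t • ((x, l) - (x, l'))).2 i = l i + 1 - t := by
        simp only [Prod.snd_add, Prod.smul_snd, Prod.snd_sub]
        rw [PiLp.add_apply, PiLp.smul_apply, PiLp.sub_apply]
        show l' i + t * (l i - l' i) = l i + 1 - t
        have : l' i = l i + 1 := by show l i + (if i = i then 1 else 0) = l i + 1; simp
        rw [this]; ring
      rw [hfst, hsnd] at this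
      refine lt_of_le_of_lt this ?_
      exact_mod_cast (by linarith : l i + 1 - t < l i)
  · rintro ⟨hx, hstrict⟩
    rw [mem_iInter] at hx
    have hxS : (x, l) ∈ S := fun i => (hstrict i).le
    refine prolong_ri hSconv hxS ?_
    rintro ⟨y, μ⟩ hy
    have hyi : ∀ i, y ∈ {x : EuclideanSpace ℝ (Fin n) | f i x < ⊤} := fun i =>
      lt_of_le_of_lt (hy i) (EReal.coe_lt_top _)
    choose t ht hzdom using fun i => ri_prolong (hx i) (hyi i)
    -- per-index eventual bound
    have E1 : ∀ i, ∀ᶠ r in 𝓝[>] (1:ℝ),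
        f i (y + r • (x - y)) ≤ ((μ i + r * (l i - μ i) : ℝ) : EReal) := by
      intro i
      set z := y + t i • (x - y) with hzdef
      have hxd : x ∈ {x : EuclideanSpace ℝ (Fin n) | f i x < ⊤} :=
        intrinsicInterior_subset (hx i)
      have hax : f i x = ((f i x).toReal : EReal) := hreal i x hxd
      have hMz : f i z = ((f i z).toReal : EReal) := hreal i z (hzdom i)
      set a : ℝ := (f i x).toReal with ha
      set M : ℝ := (f i z).toReal with hM
      set c : ℝ := (t i - 1)⁻¹ with hc
      have htc : (0:ℝ) < t i - 1 := by linarith [ht i]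
      have hA : ∀ r ∈ Ioc (1:ℝ) (t i),
          f i (y + r • (x - y)) ≤ (((1 - (r-1)*c) * a + ((r-1)*c) * M : ℝ) : EReal) := by
        intro r hr
        have hs0 : (0:ℝ) ≤ (r-1)*c := by
          apply mul_nonneg (by linarith [hr.1]) (le_of_lt (by rw [hc]; positivity))
        have hs1 : (r-1)*c ≤ 1 := by
          rw [hc]
          have h' : (r-1) * (t i - 1)⁻¹ ≤ (t i - 1) * (t i - 1)⁻¹ :=
            mul_le_mul_of_nonneg_right (by linarith [hr.2]) (by positivity)
          rwa [mul_inv_cancel₀ (ne_of_gt htc)] at h'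
        have h1 : ((x, a) : EuclideanSpace ℝ (Fin n) × ℝ) ∈
            {p : EuclideanSpace ℝ (Fin n) × ℝ | f i p.1 ≤ (p.2 : EReal)} := le_of_eq hax
        have h2 : ((z, M) : EuclideanSpace ℝ (Fin n) × ℝ) ∈
            {p : EuclideanSpace ℝ (Fin n) × ℝ | f i p.1 ≤ (p.2 : EReal)} := le_of_eq hMz
        have hcomb := hconv i h1 h2 (by linarith : (0:ℝ) ≤ 1 - (r-1)*c) hs0 (by ring)
        simp only [Prod.smul_mk, Prod.mk_add_mk, mem_setOf_eq, smul_eq_mul] at hcomb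
        have hfirst : (1 - (r-1)*c) • x + ((r-1)*c) • z = y + r • (x - y) := by
          rw [hzdef, hc]
          have hne : t i - 1 ≠ 0 := ne_of_gt htc
          match_scalars <;> field_simp <;> ring
        rwa [hfirst] at hcomb
      have hB : ∀ᶠ r in 𝓝 (1:ℝ),
          (1 - (r-1)*c) * a + ((r-1)*c) * M < μ i + r * (l i - μ i) := by
        have hLc : Continuous fun r : ℝ => (1 - (r-1)*c) * a + ((r-1)*c) * M := by
          fun_prop
        have hRc : Continuous fun r : ℝ => μ i + r * (l i - μ i) := by fun_prop
        have hL : Filter.Tendsto (fun r : ℝ => (1 - (r-1)*c) * a + ((r-1)*c) * M)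
            (𝓝 1) (𝓝 a) := by
          have h := hLc.tendsto 1
          convert h using 2
          ring
        have hR : Filter.Tendsto (fun r : ℝ => μ i + r * (l i - μ i)) (𝓝 1) (𝓝 (l i)) := by
          have h := hRc.tendsto 1
          convert h using 2
          ring
        have haless : a < l i := by
          have hlt := hstrict i
          rw [hax] at hlt
          exact_mod_cast hlt
        exact hL.eventually_lt hR haless
      have hIoc : ∀ᶠ r in 𝓝[>] (1:ℝ), r ∈ Ioc (1:ℝ) (t i) := by
        filter_upwards [Ioo_mem_nhdsGT_of_mem (by exact ⟨le_refl 1, ht i⟩ : (1:ℝ) ∈ Ico 1 (t i))]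
          with r hr
        exact ⟨hr.1, hr.2.le⟩
      filter_upwards [hIoc, hB.filter_mono nhdsWithin_le_nhds] with r hr hlt
      refine (hA r hr).trans ?_
      exact_mod_cast hlt.le
    have hall : ∀ᶠ r in 𝓝[>] (1:ℝ), ∀ i,
        f i (y + r • (x - y)) ≤ ((μ i + r * (l i - μ i) : ℝ) : EReal) :=
      eventually_all.2 E1
    have hgt : ∀ᶠ r in 𝓝[>] (1:ℝ), 1 < r := eventually_mem_nhdsWithin
    obtain ⟨r, hr1, hr2⟩ := (hgt.and hall).exists
    refine ⟨r, hr1, ?_⟩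
    intro i
    have hfst : ((y, μ) + r • ((x, l) - (y, μ))).1 = y + r • (x - y) := by
      simp [Prod.smul_fst]
    have hsnd : ((y, μ) + r • ((x, l) - (y, μ))).2 i = μ i + r * (l i - μ i) := by
      simp only [Prod.snd_add, Prod.smul_snd, Prod.snd_sub]
      rw [PiLp.add_apply, PiLp.smul_apply, PiLp.sub_apply, smul_eq_mul]
    rw [hfst, hsnd]
    exact hr2 i
end

section
/- Let F₁, F₂ : ℝⁿ ⇉ ℝᵐ be convex set-valued mappings with ri(dom(F₁)) ∩ ri(dom(F₂)) ≠ ∅. Then for all (x̄, ȳ) ∈ gph(F₁ + F₂) and v ∈ ℝᵐ, D*(F₁ + F₂)(x̄, ȳ)(v) = ⋂_{(ȳ₁, ȳ₂) ∈ S(x̄, ȳ)} [D*F₁(x̄, ȳ₁)(v) + D*F₂(x̄, ȳ₂)(v)], where S(x̄, ȳ) = {(ȳ₁, ȳ₂) : ȳ = ȳ₁ + ȳ₂, ȳ_i ∈ F_i(x̄)}. -/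
open Set Pointwise

noncomputable section

private lemma le_of_forall_pos_le_add' {a b : ℝ} (h : ∀ ε : ℝ, 0 < ε → a ≤ b + ε) : a ≤ b := by
  by_contra hc
  push_neg at hc
  have := h ((a - b) / 2) (by linarith)
  linarith

/-- From an intrinsic interior point `z` of `S` and any `y ∈ S`, one can move a bit past `z`
away from `y` and stay in `S`. -/
private lemma lineExt {E : Type*} [NormedAddCommGroup E] [NormedSpace ℝ E] {S : Set E} {z y : E}
    (hz : z ∈ intrinsicInterior ℝ S) (hy : y ∈ S) :
    ∃ r : ℝ, 0 < r ∧ z + r • (z - y) ∈ S := by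
  obtain ⟨z', hz', hz'val⟩ := hz
  have hyW : y ∈ affineSpan ℝ S := subset_affineSpan ℝ S hy
  have hzW : z ∈ affineSpan ℝ S := by rw [← hz'val]; exact z'.2
  have hmem : ∀ t : ℝ, t • (z - y) + y ∈ affineSpan ℝ S := by
    intro t
    have := (affineSpan ℝ S).smul_vsub_vadd_mem t hzW hyW hyW
    simpa [vsub_eq_sub, vadd_eq_add] using this
  set c : ℝ → affineSpan ℝ S := fun t => ⟨t • (z - y) + y, hmem t⟩ with hc
  have hcont : Continuous c :=
    Continuous.subtype_mk ((continuous_id.smul continuous_const).add continuous_const) _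
  have hc1 : c 1 = z' := by
    apply Subtype.ext
    simp [hc, hz'val.symm]
  have h1mem : (1 : ℝ) ∈ c ⁻¹' interior (((↑) : affineSpan ℝ S → E) ⁻¹' S) := by
    simp only [Set.mem_preimage, hc1]; exact hz'
  have hopen : IsOpen (c ⁻¹' interior (((↑) : affineSpan ℝ S → E) ⁻¹' S)) :=
    isOpen_interior.preimage hcont
  obtain ⟨ε, hε, hball⟩ := Metric.isOpen_iff.mp hopen 1 h1mem
  refine ⟨ε / 2, by positivity, ?_⟩
  have hb : (1 + ε / 2) ∈ Metric.ball (1 : ℝ) ε := by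
    simp only [Metric.mem_ball, Real.dist_eq]
    rw [abs_of_nonneg (by linarith)]
    linarith
  have := interior_subset (hball hb)
  simp only [Set.mem_preimage, hc] at this
  have harg : (1 + ε / 2) • (z - y) + y = z + (ε / 2) • (z - y) := by
    rw [add_smul, one_smul]; abel
  rwa [harg] at this

/-- If a continuous linear functional attains its max over `S` at an intrinsic interior point `z`,
then its value at any `y ∈ S` is at least `f z` (hence equal). -/
private lemma riMax {E : Type*} [NormedAddCommGroup E] [NormedSpace ℝ E] {S : Set E} {z y : E}
    (f : E →L[ℝ] ℝ) (hz : z ∈ intrinsicInterior ℝ S) (hy : y ∈ S)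
    (h : ∀ x ∈ S, f x ≤ f z) : f z ≤ f y := by
  obtain ⟨r, hr, hm⟩ := lineExt hz hy
  have hle := h _ hm
  have hcalc : f (z + r • (z - y)) = f z + r * (f z - f y) := by
    rw [map_add, map_smul, map_sub]; simp [smul_eq_mul]
  rw [hcalc] at hle
  nlinarith

/-- Separation of the origin from a convex set not containing it, in finite dimensions:
there is a functional which is `≤ 0` on the set and `< 0` somewhere on it. -/
private lemma sep {E : Type*} [NormedAddCommGroup E] [NormedSpace ℝ E] [FiniteDimensional ℝ E]
    {A : Set E} (hA : Convex ℝ A) (hne : A.Nonempty) (h0 : (0 : E) ∉ A) :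
    ∃ g : E →L[ℝ] ℝ, (∀ a ∈ A, g a ≤ 0) ∧ ∃ a ∈ A, g a < 0 := by
  by_cases hcl : (0 : E) ∈ closure A
  · -- 0 is in the closure: separate inside the affine span, which is a linear subspace.
    have hAW : A ⊆ (affineSpan ℝ A : Set E) := subset_affineSpan ℝ A
    have hWclosed : IsClosed ((affineSpan ℝ A : AffineSubspace ℝ E) : Set E) :=
      (affineSpan ℝ A).closed_of_finiteDimensional
    have h0W : (0 : E) ∈ affineSpan ℝ A :=
      hWclosed.closure_subset_iff.mpr hAW hcl
    set V : Submodule ℝ E := (affineSpan ℝ A).direction with hV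
    have hmem : ∀ x : E, x ∈ affineSpan ℝ A ↔ x ∈ V := by
      intro x
      constructor
      · intro hx
        have := AffineSubspace.vsub_mem_direction hx h0W
        simpa [vsub_eq_sub] using this
      · intro hx
        have := AffineSubspace.vadd_mem_of_mem_direction hx h0W
        simpa [vadd_eq_add] using this
    obtain ⟨z, z', hz', hz'val⟩ := hne.intrinsicInterior hA
    set A' : Set V := ((↑) : V → E) ⁻¹' A with hA'def
    have hA' : Convex ℝ A' := hA.linear_preimage V.subtype
    let e : affineSpan ℝ A ≃ₜ V :=
      { toFun := fun x => ⟨x.1, (hmem x.1).1 x.2⟩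
        invFun := fun x => ⟨x.1, (hmem x.1).2 x.2⟩
        left_inv := fun x => rfl
        right_inv := fun x => rfl
        continuous_toFun := Continuous.subtype_mk continuous_subtype_val _
        continuous_invFun := Continuous.subtype_mk continuous_subtype_val _ }
    have hsets : e '' (((↑) : affineSpan ℝ A → E) ⁻¹' A) = A' := by
      ext x
      constructor
      · rintro ⟨w, hw, rfl⟩; exact hw
      · intro hx; exact ⟨e.symm x, hx, e.apply_symm_apply x⟩
    have hz2 : e z' ∈ interior A' := by
      rw [← hsets, ← Homeomorph.image_interior]
      exact ⟨z', hz', rfl⟩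
    have h0A' : (0 : V) ∉ interior A' := by
      intro h
      have h' : (0 : V) ∈ A' := (interior_subset : interior A' ⊆ A') h
      have h'' : ((0 : V) : E) ∈ A := h'
      exact h0 (by simpa using h'')
    obtain ⟨f, hf⟩ :=
      geometric_hahn_banach_open_point (hA'.interior) isOpen_interior h0A'
    have hf0 : ∀ a ∈ interior A', f a < 0 := by
      intro a ha
      have := hf a ha
      simpa using this
    have hle : ∀ a ∈ A', f a ≤ 0 := by
      intro a ha
      by_contra hpos
      push_neg at hpos
      have hz0 : f (e z') < 0 := hf0 _ hz2
      set t : ℝ := f a / (f a - f (e z')) with ht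
      have h1 : 0 < f a - f (e z') := by linarith
      have ht0 : 0 < t := div_pos hpos h1
      have ht1 : t < 1 := by rw [ht, div_lt_one h1]; linarith
      have hcombo := hA'.combo_interior_self_mem_interior hz2 ha ht0
        (show (0:ℝ) ≤ 1 - t by linarith) (show t + (1 - t) = 1 by ring)
      have hlt := hf0 _ hcombo
      have hmul : t * (f a - f (e z')) = f a := by
        rw [ht]; field_simp
      have hval : f (t • e z' + (1 - t) • a) = 0 := by
        rw [map_add, map_smul, map_smul]
        simp only [smul_eq_mul]
        linear_combination (-1 : ℝ) * hmul
      rw [hval] at hlt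
      exact lt_irrefl _ hlt
    obtain ⟨g, hg, -⟩ := exists_extension_norm_eq V f
    refine ⟨g, ?_, ?_⟩
    · intro a ha
      have hga : g a = f ⟨a, (hmem a).1 (hAW ha)⟩ := hg ⟨a, (hmem a).1 (hAW ha)⟩
      rw [hga]
      exact hle _ ha
    · refine ⟨(e z' : E), show (e z' : E) ∈ A from (interior_subset : interior A' ⊆ A') hz2, ?_⟩
      have := hf0 _ hz2
      rwa [← hg (e z')] at this
  · -- 0 is not in the closure: strict separation from the closed convex closure.
    obtain ⟨f, s, hf, hs⟩ :=
      geometric_hahn_banach_closed_point hA.closure isClosed_closure hcl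
    have hs0 : s < 0 := by simpa using hs
    obtain ⟨a₀, ha₀⟩ := hne
    exact ⟨f, fun a ha => le_of_lt (lt_trans (hf a (subset_closure ha)) hs0),
      a₀, ha₀, lt_trans (hf a₀ (subset_closure ha₀)) hs0⟩

private lemma inner_combo {G : Type*} [NormedAddCommGroup G] [InnerProductSpace ℝ G]
    (w c y y' : G) {a b : ℝ} (hab : a + b = 1) :
    (inner ℝ w (a • y + b • y' - c) : ℝ)
      = a * (inner ℝ w (y - c) : ℝ) + b * (inner ℝ w (y' - c) : ℝ) := by
  have harg : a • y + b • y' - c = a • (y - c) + b • (y' - c) := by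
    have h : a • (y - c) + b • (y' - c) = a • y + b • y' - (a + b) • c := by module
    rw [h, hab, one_smul]
  rw [harg, inner_add_right, real_inner_smul_right, real_inner_smul_right]

/-- Coderivative of a set-valued mapping `F` at `(x̄, ȳ)`, applied to `v`. -/
def coderiv {n m : ℕ} (F : EuclideanSpace ℝ (Fin n) → Set (EuclideanSpace ℝ (Fin m)))
    (xbar : EuclideanSpace ℝ (Fin n)) (ybar : EuclideanSpace ℝ (Fin m))
    (v : EuclideanSpace ℝ (Fin m)) : Set (EuclideanSpace ℝ (Fin n)) :=
  {u | ∀ p : EuclideanSpace ℝ (Fin n) × EuclideanSpace ℝ (Fin m), p.2 ∈ F p.1 →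
    (inner ℝ u (p.1 - xbar) : ℝ) - (inner ℝ v (p.2 - ybar) : ℝ) ≤ 0}

set_option maxHeartbeats 2000000 in
/-- Coderivative sum rule under the relative interior qualification condition
on domains. -/
theorem stmt_13 (n m : ℕ)
    (F₁ F₂ : EuclideanSpace ℝ (Fin n) → Set (EuclideanSpace ℝ (Fin m)))
    (h₁ : Convex ℝ {p : EuclideanSpace ℝ (Fin n) × EuclideanSpace ℝ (Fin m) | p.2 ∈ F₁ p.1})
    (h₂ : Convex ℝ {p : EuclideanSpace ℝ (Fin n) × EuclideanSpace ℝ (Fin m) | p.2 ∈ F₂ p.1})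
    (hqc : (intrinsicInterior ℝ {x | (F₁ x).Nonempty} ∩
        intrinsicInterior ℝ {x | (F₂ x).Nonempty}).Nonempty)
    (xbar : EuclideanSpace ℝ (Fin n)) (ybar : EuclideanSpace ℝ (Fin m))
    (hxy : ybar ∈ F₁ xbar + F₂ xbar) (v : EuclideanSpace ℝ (Fin m)) :
    coderiv (fun x => F₁ x + F₂ x) xbar ybar v =
      ⋂ q ∈ {q : EuclideanSpace ℝ (Fin m) × EuclideanSpace ℝ (Fin m) |
          ybar = q.1 + q.2 ∧ q.1 ∈ F₁ xbar ∧ q.2 ∈ F₂ xbar},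
        (coderiv F₁ xbar q.1 v + coderiv F₂ xbar q.2 v) := by
  ext u
  simp only [Set.mem_iInter, Set.mem_setOf_eq]
  constructor
  · -- hard direction
    intro hu q hq
    obtain ⟨hqsum, hq1, hq2⟩ := hq
    simp only [coderiv, Set.mem_setOf_eq] at hu
    set C : Set (EuclideanSpace ℝ (Fin n) × ℝ) :=
      {p | ∃ y₁, y₁ ∈ F₁ p.1 ∧ (inner ℝ v (y₁ - q.1) : ℝ) < p.2} with hCdef
    set D : Set (EuclideanSpace ℝ (Fin n) × ℝ) :=
      {p | ∃ y₂, y₂ ∈ F₂ p.1 ∧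
        p.2 ≤ (inner ℝ u (p.1 - xbar) : ℝ) - (inner ℝ v (y₂ - q.2) : ℝ)} with hDdef
    have hCmem : ∀ p : EuclideanSpace ℝ (Fin n) × ℝ,
        p ∈ C ↔ ∃ y₁, y₁ ∈ F₁ p.1 ∧ (inner ℝ v (y₁ - q.1) : ℝ) < p.2 := fun p => Iff.rfl
    have hDmem : ∀ p : EuclideanSpace ℝ (Fin n) × ℝ,
        p ∈ D ↔ ∃ y₂, y₂ ∈ F₂ p.1 ∧
          p.2 ≤ (inner ℝ u (p.1 - xbar) : ℝ) - (inner ℝ v (y₂ - q.2) : ℝ) := fun p => Iff.rfl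
    have hC : Convex ℝ C := by
      intro p hp p' hp' a b ha hb hab
      obtain ⟨y₁, hy₁, hlt⟩ := (hCmem p).mp hp
      obtain ⟨y₁', hy₁', hlt'⟩ := (hCmem p').mp hp'
      refine (hCmem _).mpr ⟨a • y₁ + b • y₁', ?_, ?_⟩
      · exact h₁ (show ((p.1, y₁) : _ × _) ∈ _ from hy₁)
          (show ((p'.1, y₁') : _ × _) ∈ _ from hy₁') ha hb hab
      · simp only [Prod.fst_add, Prod.snd_add, Prod.smul_fst, Prod.smul_snd, smul_eq_mul]
        rw [inner_combo v q.1 y₁ y₁' hab]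
        rcases ha.lt_or_eq with hpos | h0a
        · nlinarith [mul_le_mul_of_nonneg_left hlt'.le hb, mul_lt_mul_of_pos_left hlt hpos]
        · have hb1 : b = 1 := by linarith
          rw [← h0a, hb1]
          simpa using hlt'
    have hD : Convex ℝ D := by
      intro p hp p' hp' a b ha hb hab
      obtain ⟨y₂, hy₂, hle⟩ := (hDmem p).mp hp
      obtain ⟨y₂', hy₂', hle'⟩ := (hDmem p').mp hp'
      refine (hDmem _).mpr ⟨a • y₂ + b • y₂', ?_, ?_⟩
      · exact h₂ (show ((p.1, y₂) : _ × _) ∈ _ from hy₂)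
          (show ((p'.1, y₂') : _ × _) ∈ _ from hy₂') ha hb hab
      · simp only [Prod.fst_add, Prod.snd_add, Prod.smul_fst, Prod.smul_snd, smul_eq_mul]
        rw [inner_combo v q.2 y₂ y₂' hab, inner_combo u xbar p.1 p'.1 hab]
        nlinarith [mul_le_mul_of_nonneg_left hle ha, mul_le_mul_of_nonneg_left hle' hb]
    have hCne : ((xbar, (1:ℝ)) : _ × ℝ) ∈ C := (hCmem _).mpr ⟨q.1, hq1, by simp⟩
    have hDne : ((xbar, (0:ℝ)) : _ × ℝ) ∈ D := (hDmem _).mpr ⟨q.2, hq2, by simp⟩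
    have hA : Convex ℝ (C - D) := hC.sub hD
    have hAne : (C - D).Nonempty := ⟨_, Set.sub_mem_sub hCne hDne⟩
    have h0A : (0 : EuclideanSpace ℝ (Fin n) × ℝ) ∉ C - D := by
      intro h0
      rw [Set.mem_sub] at h0
      obtain ⟨c, hc, d, hd, hcd⟩ := h0
      rw [sub_eq_zero] at hcd
      subst hcd
      obtain ⟨y₁, hy₁, hlt⟩ := (hCmem c).mp hc
      obtain ⟨y₂, hy₂, hle⟩ := (hDmem c).mp hd
      have hmem : y₁ + y₂ ∈ F₁ c.1 + F₂ c.1 := Set.add_mem_add hy₁ hy₂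
      have hiq := hu (c.1, y₁ + y₂) hmem
      have hsum : (inner ℝ v (y₁ + y₂ - ybar) : ℝ)
          = (inner ℝ v (y₁ - q.1) : ℝ) + (inner ℝ v (y₂ - q.2) : ℝ) := by
        rw [hqsum, show y₁ + y₂ - (q.1 + q.2) = (y₁ - q.1) + (y₂ - q.2) by abel,
          inner_add_right]
      simp only at hiq
      rw [hsum] at hiq
      linarith
    obtain ⟨g, hgle, a₀, ha₀, hga₀⟩ := sep hA hAne h0A
    have hCD : ∀ c ∈ C, ∀ d ∈ D, g c ≤ g d := by
      intro c hc d hd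
      have := hgle _ (Set.sub_mem_sub hc hd)
      rw [map_sub] at this
      linarith
    set φ : EuclideanSpace ℝ (Fin n) →L[ℝ] ℝ :=
      g.comp (ContinuousLinearMap.inl ℝ (EuclideanSpace ℝ (Fin n)) ℝ) with hφ
    set s : ℝ := g ((0 : EuclideanSpace ℝ (Fin n)), (1:ℝ)) with hs
    have hglin : ∀ (x : EuclideanSpace ℝ (Fin n)) (t : ℝ), g (x, t) = φ x + t * s := by
      intro x t
      have hxt : ((x, t) : _ × ℝ)
          = ((x, (0:ℝ)) : _ × ℝ) + t • (((0 : EuclideanSpace ℝ (Fin n)), (1:ℝ)) : _ × ℝ) := by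
        simp [Prod.ext_iff]
      rw [hxt, map_add, map_smul]
      rfl
    have hsle : s ≤ 0 := by
      have h := hCD _ hCne _ hDne
      rw [hglin xbar 1, hglin xbar 0] at h
      linarith
    rw [Set.mem_add]
    rcases hsle.lt_or_eq with hslt | hseq
    · -- nonvertical separating hyperplane
      have hns : (0:ℝ) < -s := by linarith
      have hsne : s ≠ 0 := hslt.ne
      have hinv2 : (-s) * (-s)⁻¹ = 1 := mul_inv_cancel₀ hns.ne'
      set ψ : EuclideanSpace ℝ (Fin n) →L[ℝ] ℝ := (-s)⁻¹ • φ with hψ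
      set w := (InnerProductSpace.toDual ℝ (EuclideanSpace ℝ (Fin n))).symm ψ with hw
      have hwip : ∀ x, (inner ℝ w x : ℝ) = (-s)⁻¹ * φ x := by
        intro x
        rw [hw, InnerProductSpace.toDual_symm_apply]
        simp [hψ, smul_eq_mul]
      refine ⟨w, ?_, u - w, ?_, by abel⟩
      · -- w is a coderivative of F₁
        intro p hp
        have key : ∀ δ : ℝ, 0 < δ →
            φ p.1 + ((inner ℝ v (p.2 - q.1) : ℝ) + δ) * s ≤ φ xbar := by
          intro δ hδ
          have hcmem : ((p.1, (inner ℝ v (p.2 - q.1) : ℝ) + δ) : _ × ℝ) ∈ C :=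
            (hCmem _).mpr ⟨p.2, hp, by simpa using hδ⟩
          have h := hCD _ hcmem _ hDne
          rw [hglin, hglin] at h
          linarith
        have key2 : φ p.1 - φ xbar ≤ (inner ℝ v (p.2 - q.1) : ℝ) * (-s) := by
          apply le_of_forall_pos_le_add'
          intro ε hε
          have hδ : (0:ℝ) < ε / (-s) := by positivity
          have h := key (ε / (-s)) hδ
          have hmul : (ε / (-s)) * s = -ε := by
            rw [div_eq_mul_inv, show ε * (-s)⁻¹ * s = -(ε * ((-s) * (-s)⁻¹)) from by ring,
              hinv2]
            ring
          nlinarith [h, hmul]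
        have hwv : (inner ℝ w (p.1 - xbar) : ℝ) = (-s)⁻¹ * (φ p.1 - φ xbar) := by
          rw [hwip, map_sub]
        rw [hwv]
        have hdiv := mul_le_mul_of_nonneg_left key2 (inv_pos.mpr hns).le
        have hτ : (-s)⁻¹ * ((inner ℝ v (p.2 - q.1) : ℝ) * (-s)) = (inner ℝ v (p.2 - q.1) : ℝ) := by
          rw [show (-s)⁻¹ * ((inner ℝ v (p.2 - q.1) : ℝ) * (-s))
              = (inner ℝ v (p.2 - q.1) : ℝ) * ((-s) * (-s)⁻¹) from by ring, hinv2, mul_one]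
        linarith
      · -- u - w is a coderivative of F₂
        intro p hp
        have key : ∀ δ : ℝ, 0 < δ →
            φ xbar + δ * s ≤ φ p.1 + ((inner ℝ u (p.1 - xbar) : ℝ) - (inner ℝ v (p.2 - q.2) : ℝ)) * s := by
          intro δ hδ
          have hcmem : ((xbar, δ) : _ × ℝ) ∈ C := (hCmem _).mpr ⟨q.1, hq1, by simpa using hδ⟩
          have hdmem : ((p.1, (inner ℝ u (p.1 - xbar) : ℝ) - (inner ℝ v (p.2 - q.2) : ℝ)) : _ × ℝ) ∈ D :=
            (hDmem _).mpr ⟨p.2, hp, le_refl _⟩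
          have h := hCD _ hcmem _ hdmem
          rw [hglin, hglin] at h
          linarith
        have key2 : φ xbar - φ p.1
            ≤ ((inner ℝ u (p.1 - xbar) : ℝ) - (inner ℝ v (p.2 - q.2) : ℝ)) * s := by
          apply le_of_forall_pos_le_add'
          intro ε hε
          have hδ : (0:ℝ) < ε / (-s) := by positivity
          have h := key _ hδ
          have hmul : (ε / (-s)) * s = -ε := by
            rw [div_eq_mul_inv, show ε * (-s)⁻¹ * s = -(ε * ((-s) * (-s)⁻¹)) from by ring,
              hinv2]
            ring
          nlinarith [h, hmul]
        have hiw : (inner ℝ (u - w) (p.1 - xbar) : ℝ)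
            = (inner ℝ u (p.1 - xbar) : ℝ) - (-s)⁻¹ * (φ p.1 - φ xbar) := by
          rw [inner_sub_left, hwip, map_sub]
        rw [hiw]
        have hdiv := mul_le_mul_of_nonneg_left key2 (inv_pos.mpr hns).le
        have hrhs : (-s)⁻¹ * (((inner ℝ u (p.1 - xbar) : ℝ) - (inner ℝ v (p.2 - q.2) : ℝ)) * s)
            = -((inner ℝ u (p.1 - xbar) : ℝ) - (inner ℝ v (p.2 - q.2) : ℝ)) := by
          rw [show (-s)⁻¹ * (((inner ℝ u (p.1 - xbar) : ℝ) - (inner ℝ v (p.2 - q.2) : ℝ)) * s)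
              = -(((inner ℝ u (p.1 - xbar) : ℝ) - (inner ℝ v (p.2 - q.2) : ℝ)) * ((-s) * (-s)⁻¹))
              from by ring, hinv2]
          ring
        rw [hrhs] at hdiv
        have hneg : (-s)⁻¹ * (φ xbar - φ p.1) = -((-s)⁻¹ * (φ p.1 - φ xbar)) := by ring
        rw [hneg] at hdiv
        linarith
    · -- vertical hyperplane: contradiction with the qualification condition
      exfalso
      have hφCD : ∀ x, (F₁ x).Nonempty → ∀ x', (F₂ x').Nonempty → φ x ≤ φ x' := by
        rintro x ⟨y₁, hy₁⟩ x' ⟨y₂, hy₂⟩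
        have hc : ((x, (inner ℝ v (y₁ - q.1) : ℝ) + 1) : _ × ℝ) ∈ C :=
          (hCmem _).mpr ⟨y₁, hy₁, by simp⟩
        have hd : ((x', (inner ℝ u (x' - xbar) : ℝ) - (inner ℝ v (y₂ - q.2) : ℝ)) : _ × ℝ) ∈ D :=
          (hDmem _).mpr ⟨y₂, hy₂, le_refl _⟩
        have h := hCD _ hc _ hd
        rw [hglin, hglin, hseq] at h
        simp only [mul_zero, add_zero] at h
        linarith
      obtain ⟨xs, hxs₁, hxs₂⟩ := hqc
      have hxs₁' : xs ∈ {x : EuclideanSpace ℝ (Fin n) | (F₁ x).Nonempty} :=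
        intrinsicInterior_subset hxs₁
      have hxs₂' : xs ∈ {x : EuclideanSpace ℝ (Fin n) | (F₂ x).Nonempty} :=
        intrinsicInterior_subset hxs₂
      rw [Set.mem_sub] at ha₀
      obtain ⟨c₀, hc₀, d₀, hd₀, hcd₀⟩ := ha₀
      have hgstrict : g c₀ < g d₀ := by
        rw [← hcd₀, map_sub] at hga₀
        linarith
      obtain ⟨y₁₀, hy₁₀, -⟩ := (hCmem c₀).mp hc₀
      obtain ⟨y₂₀, hy₂₀, -⟩ := (hDmem d₀).mp hd₀
      have hφstrict : φ c₀.1 < φ d₀.1 := by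
        have e1 : g c₀ = φ c₀.1 + c₀.2 * s := hglin c₀.1 c₀.2
        have e2 : g d₀ = φ d₀.1 + d₀.2 * s := hglin d₀.1 d₀.2
        rw [e1, e2, hseq] at hgstrict
        simpa using hgstrict
      have hmax : ∀ x ∈ {x | (F₁ x).Nonempty}, φ x ≤ φ xs := fun x hx => hφCD x hx xs hxs₂'
      have h1 := riMax φ hxs₁ (show c₀.1 ∈ {x | (F₁ x).Nonempty} from ⟨y₁₀, hy₁₀⟩) hmax
      have hmin : ∀ x ∈ {x | (F₂ x).Nonempty}, (-φ) x ≤ (-φ) xs := by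
        intro x hx
        have := hφCD xs hxs₁' x hx
        simp only [ContinuousLinearMap.neg_apply]
        linarith
      have h2 := riMax (-φ) hxs₂ (show d₀.1 ∈ {x | (F₂ x).Nonempty} from ⟨y₂₀, hy₂₀⟩) hmin
      simp only [ContinuousLinearMap.neg_apply] at h2
      linarith
  · -- easy direction
    intro h p hp
    obtain ⟨y₁, hy₁, y₂, hy₂, hsum⟩ := Set.mem_add.mp hxy
    have hq := h (y₁, y₂) ⟨hsum.symm, hy₁, hy₂⟩
    obtain ⟨u₁, hu₁, u₂, hu₂, husum⟩ := Set.mem_add.mp hq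
    obtain ⟨z₁, hz₁, z₂, hz₂, hzsum⟩ := Set.mem_add.mp hp
    have i1 := hu₁ (p.1, z₁) hz₁
    have i2 := hu₂ (p.1, z₂) hz₂
    simp only at i1 i2
    have e1 : (inner ℝ u (p.1 - xbar) : ℝ)
        = (inner ℝ u₁ (p.1 - xbar) : ℝ) + (inner ℝ u₂ (p.1 - xbar) : ℝ) := by
      rw [← husum, inner_add_left]
    have e2 : (inner ℝ v (p.2 - ybar) : ℝ)
        = (inner ℝ v (z₁ - y₁) : ℝ) + (inner ℝ v (z₂ - y₂) : ℝ) := by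
      rw [← hzsum, hsum.symm, show z₁ + z₂ - (y₁ + y₂) = (z₁ - y₁) + (z₂ - y₂) by abel,
        inner_add_right]
    show (inner ℝ u (p.1 - xbar) : ℝ) - (inner ℝ v (p.2 - ybar) : ℝ) ≤ 0
    rw [e1, e2]
    linarith
end
end
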